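/- arXiv:2208.11002 — 7 statements merged into one kernel-verified Lean document; each statement's English description precedes it below -/
import Mathlib

section
/- If G is a connected simple graph and Q_{-1} = ((-1)^{∂(x,y)})_{x,y∈V} is positive semidefinite, then G contains no triple of vertices (x₁, x₂, x₃) with ∂(x₁,x₂) = ∂(x₁,x₃) and x₂ adjacent to x₃. -/
open scoped ComplexOrder

/-- `Q`-matrix positive semidefiniteness: the kernel `(x, y) ↦ q ^ ∂(x,y)` is a
positive definite kernel on the vertex set (with `0 ^ 0 = 1`). -/
def QPSD {V : Type*} (G : SimpleGraph V) (q : ℝ) : Prop :=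
  ∀ f : V →₀ ℂ,
    0 ≤ ∑ x ∈ f.support, ∑ y ∈ f.support,
      (starRingEnd ℂ) (f x) * f y * (q : ℂ) ^ G.dist x y

/-
If `x₂ ~ x₃` and `∂(x₁, x₂) = ∂(x₁, x₃) = d`, then on `x₁, x₂, x₃` the kernel `(-1)^∂` is
`[[1, ε, ε], [ε, 1, -1], [ε, -1, 1]]` with `ε = (-1)^d`, and the test vector `(-ε, 1, 1)` has
quadratic form `1 - 4 + 2 - 2 = -3 < 0`.
-/

open Finset Function

namespace Finsupp

variable {V : Type*}

def kernelForm (K : V → V → ℂ) (f : V →₀ ℂ) : ℂ :=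
  ∑ x ∈ f.support, ∑ y ∈ f.support, starRingEnd ℂ (f x) * f y * K x y

theorem kernelForm_eq_sum_of_support_subset (K : V → V → ℂ) {f : V →₀ ℂ} {s : Finset V}
    (hs : f.support ⊆ s) :
    kernelForm K f = ∑ x ∈ s, ∑ y ∈ s, starRingEnd ℂ (f x) * f y * K x y := by
  have hzero : ∀ x ∈ s, x ∉ f.support → f x = 0 := fun x _ hx => notMem_support_iff.1 hx
  rw [kernelForm, sum_subset hs fun x hxs hx => by simp [hzero x hxs hx]]
  exact Finset.sum_congr rfl fun x _ => sum_subset hs fun y hys hy => by simp [hzero y hys hy]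

theorem kernelForm_sum_single {ι : Type*} [Fintype ι] (K : V → V → ℂ) {v : ι → V}
    (hv : Injective v) (a : ι → ℂ) :
    kernelForm K (∑ i, single (v i) (a i)) =
      ∑ i, ∑ j, starRingEnd ℂ (a i) * a j * K (v i) (v j) := by
  classical
  have hsupp : (∑ i, single (v i) (a i)).support ⊆ univ.image v := by
    refine support_finsetSum.trans (biUnion_subset.2 fun i _ => ?_)
    exact support_single_subset.trans (by simp)
  have happly : ∀ i, (∑ j, single (v j) (a j)) (v i) = a i := by
    simp [finsetSum_apply, single_apply, hv.eq_iff]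
  rw [kernelForm_eq_sum_of_support_subset K hsupp, sum_image fun i _ j _ h => hv h]
  simp only [happly, sum_image fun i _ j _ h => hv h]

end Finsupp

theorem SimpleGraph.ne_of_dist_eq_of_adj {V : Type*} {G : SimpleGraph V} {x₁ x₂ x₃ : V}
    (hd : G.dist x₁ x₂ = G.dist x₁ x₃) (hadj : G.Adj x₂ x₃) : x₁ ≠ x₂ := by
  rintro rfl
  simp [SimpleGraph.dist_eq_one_iff_adj.2 hadj] at hd

theorem stmt4_general {V : Type*} (G : SimpleGraph V)
    (hpsd : QPSD G (-1)) :
    ¬ ∃ x₁ x₂ x₃ : V, G.dist x₁ x₂ = G.dist x₁ x₃ ∧ G.Adj x₂ x₃ := by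
  rintro ⟨x₁, x₂, x₃, hd, hadj⟩
  have h₁₂ : x₁ ≠ x₂ := G.ne_of_dist_eq_of_adj hd hadj
  have h₁₃ : x₁ ≠ x₃ := G.ne_of_dist_eq_of_adj hd.symm hadj.symm
  have hv : Injective ![x₁, x₂, x₃] := by
    intro i j h
    fin_cases i <;> fin_cases j <;> simp_all [eq_comm]
  set ε : ℂ := (-1) ^ G.dist x₁ x₂ with hε_def
  have hε : ε * ε = 1 := by rw [← pow_add, ← two_mul, pow_mul]; norm_num
  have hform := hpsd (∑ i, Finsupp.single (![x₁, x₂, x₃] i) (![-ε, 1, 1] i))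
  change 0 ≤ Finsupp.kernelForm _ _ at hform
  rw [Finsupp.kernelForm_sum_single _ hv] at hform
  have h₂₁ : G.dist x₂ x₁ = G.dist x₁ x₂ := G.dist_comm
  have h₃₁ : G.dist x₃ x₁ = G.dist x₁ x₂ := G.dist_comm.trans hd.symm
  have h₂₃ : G.dist x₂ x₃ = 1 := SimpleGraph.dist_eq_one_iff_adj.2 hadj
  have h₃₂ : G.dist x₃ x₂ = 1 := SimpleGraph.dist_eq_one_iff_adj.2 hadj.symm
  simp only [Fin.sum_univ_three, Matrix.cons_val, G.dist_self, h₂₁, h₃₁, h₂₃, h₃₂, ← hd,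
    Complex.ofReal_neg, Complex.ofReal_one, ← hε_def] at hform
  have hconj : starRingEnd ℂ ε = ε := by simp [ε]
  have hval : (0 : ℂ) ≤ -3 := by
    convert hform using 1
    simp only [map_neg, map_one, hconj, pow_zero, pow_one]
    linear_combination (3 : ℂ) * hε
  norm_num [Complex.le_def] at hval

theorem stmt4 {V : Type*} (G : SimpleGraph V) (hconn : G.Connected)
    (hpsd : QPSD G (-1)) :
    ¬ ∃ x₁ x₂ x₃ : V, G.dist x₁ x₂ = G.dist x₁ x₃ ∧ G.Adj x₂ x₃ :=
  stmt4_general G hpsd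
end

section
/- If G is a connected bipartite simple graph, then for every real q, the matrix Q_q is positive semidefinite if and only if Q_{-q} is positive semidefinite; i.e., π(G) is symmetric about 0. -/
open scoped ComplexOrder

private noncomputable def sgn {V : Type*} (c : V → Fin 2) (x : V) : ℂ :=
  if c x = 0 then 1 else -1

private lemma sgn_walk {V : Type*} {G : SimpleGraph V} (c : G.Coloring (Fin 2))
    {x y : V} (p : G.Walk x y) :
    (-1 : ℂ) ^ p.length * sgn c x = sgn c y := by
  induction p with
  | nil => simp
  | @cons u v w h p ih =>
      have hne : c u ≠ c v := c.valid h
      have : sgn c u = - sgn c v := by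
        have hu : c u = 0 ∨ c u = 1 := by omega
        have hv : c v = 0 ∨ c v = 1 := by omega
        unfold sgn
        rcases hu with hu | hu <;> rcases hv with hv | hv <;> simp_all
      rw [SimpleGraph.Walk.length_cons, pow_succ, this, ← ih]
      ring

private lemma neg_one_pow_dist {V : Type*} {G : SimpleGraph V} (hconn : G.Connected)
    (c : G.Coloring (Fin 2)) (x y : V) :
    (-1 : ℂ) ^ G.dist x y = sgn c x * sgn c y := by
  obtain ⟨p, hp⟩ := hconn.exists_walk_length_eq_dist x y
  have := sgn_walk c p
  rw [hp] at this
  have hx : sgn c x * sgn c x = 1 := by unfold sgn; split <;> norm_num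
  calc (-1 : ℂ) ^ G.dist x y = ((-1 : ℂ) ^ G.dist x y * sgn c x) * sgn c x := by
        rw [mul_assoc, hx, mul_one]
    _ = sgn c y * sgn c x := by rw [this]
    _ = sgn c x * sgn c y := mul_comm _ _

private lemma qpsd_neg {V : Type*} (G : SimpleGraph V) (hconn : G.Connected)
    (hbip : G.Colorable 2) (q : ℝ) (h : QPSD G q) : QPSD G (-q) := by
  obtain ⟨c⟩ := hbip
  intro f
  have hsgn_ne : ∀ x, sgn c x ≠ 0 := by
    intro x; unfold sgn; split <;> norm_num
  set g : V →₀ ℂ := ⟨f.support, fun x => sgn c x * f x, by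
    intro x
    simp [Finsupp.mem_support_iff, mul_eq_zero, hsgn_ne x]⟩ with hg
  have := h g
  have hsupp : g.support = f.support := rfl
  have hcoef : ∀ x y, (starRingEnd ℂ) (g x) * g y * (q : ℂ) ^ G.dist x y
      = (starRingEnd ℂ) (f x) * f y * ((-q : ℝ) : ℂ) ^ G.dist x y := by
    intro x y
    have hgx : g x = sgn c x * f x := rfl
    have hgy : g y = sgn c y * f y := rfl
    have hreal : (starRingEnd ℂ) (sgn c x) = sgn c x := by
      unfold sgn; split <;> simp
    have hneg : ((-q : ℝ) : ℂ) ^ G.dist x y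
        = (sgn c x * sgn c y) * (q : ℂ) ^ G.dist x y := by
      push_cast
      rw [neg_eq_neg_one_mul, mul_pow, neg_one_pow_dist hconn c x y]
    rw [hgx, hgy, map_mul, hreal, hneg]
    ring
  rw [hsupp] at this
  calc (0 : ℂ) ≤ ∑ x ∈ f.support, ∑ y ∈ f.support,
        (starRingEnd ℂ) (g x) * g y * (q : ℂ) ^ G.dist x y := this
    _ = _ := by
        apply Finset.sum_congr rfl; intro x _
        apply Finset.sum_congr rfl; intro y _
        exact hcoef x y

theorem stmt8 {V : Type*} (G : SimpleGraph V) (hconn : G.Connected)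
    (hbip : G.Colorable 2) (q : ℝ) :
    QPSD G q ↔ QPSD G (-q) := by
  constructor
  · exact qpsd_neg G hconn hbip q
  · intro h
    have := qpsd_neg G hconn hbip (-q) h
    rwa [neg_neg] at this
end

section
/- For a connected simple graph G, the matrix Q_{-1} = ((-1)^{∂(x,y)})_{x,y∈V} is positive semidefinite if and only if G is bipartite. -/
open scoped ComplexOrder

private lemma neg_one_pow_mod_two (n : ℕ) : (-1 : ℂ) ^ n = (-1 : ℂ) ^ (n % 2) := by
  conv_lhs => rw [← Nat.mod_add_div n 2]
  rw [pow_add, pow_mul]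
  norm_num

private lemma qpsd_sum_superset {V : Type*} (G : SimpleGraph V) (q : ℝ) (h : QPSD G q)
    (f : V →₀ ℂ) (s : Finset V) (hs : f.support ⊆ s) :
    0 ≤ ∑ x ∈ s, ∑ y ∈ s,
      (starRingEnd ℂ) (f x) * f y * (q : ℂ) ^ G.dist x y := by
  have key : ∑ x ∈ s, ∑ y ∈ s, (starRingEnd ℂ) (f x) * f y * (q : ℂ) ^ G.dist x y
      = ∑ x ∈ f.support, ∑ y ∈ f.support,
        (starRingEnd ℂ) (f x) * f y * (q : ℂ) ^ G.dist x y := by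
    rw [← Finset.sum_subset hs (fun x _ hx => ?_)]
    · refine Finset.sum_congr rfl fun x _ => ?_
      rw [← Finset.sum_subset hs (fun y _ hy => ?_)]
      rw [Finsupp.notMem_support_iff.mp hy]
      ring
    · have hfx : f x = 0 := Finsupp.notMem_support_iff.mp hx
      simp [hfx]
  rw [key]; exact h f

theorem stmt9 {V : Type*} (G : SimpleGraph V) (hconn : G.Connected) :
    QPSD G (-1) ↔ G.Colorable 2 := by
  classical
  constructor
  · intro hpsd
    have key : ∀ x y z : V, G.Adj x y →
        (-1 : ℂ) ^ G.dist x z = -(-1 : ℂ) ^ G.dist y z := by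
      intro x y z hxy
      have hdxy : G.dist x y = 1 := SimpleGraph.dist_eq_one_iff_adj.mpr hxy
      have hdyx : G.dist y x = 1 := SimpleGraph.dist_eq_one_iff_adj.mpr hxy.symm
      have hxyne : x ≠ y := hxy.ne
      by_cases hzx : z = x
      · subst hzx; simp [SimpleGraph.dist_self, hdyx]
      by_cases hzy : z = y
      · subst hzy; simp [SimpleGraph.dist_self, hdxy]
      by_contra hcon
      -- both powers are ±1, hence equal
      have hpm : ∀ n : ℕ, (-1 : ℂ) ^ n = 1 ∨ (-1 : ℂ) ^ n = -1 := fun n => by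
        rcases Nat.even_or_odd n with h | h
        · exact Or.inl h.neg_one_pow
        · exact Or.inr h.neg_one_pow
      have heq : (-1 : ℂ) ^ G.dist y z = (-1 : ℂ) ^ G.dist x z := by
        rcases hpm (G.dist x z) with h1 | h1 <;> rcases hpm (G.dist y z) with h2 | h2
        · rw [h1, h2]
        · exact absurd (by rw [h1, h2]; ring) hcon
        · exact absurd (by rw [h1, h2]) hcon
        · rw [h1, h2]
      set ε : ℂ := (-1 : ℂ) ^ G.dist x z with hε
      have hstar : (starRingEnd ℂ) ε = ε := by
        rw [hε, map_pow]; norm_num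
      have hε2 : ε * ε = 1 := by
        rw [hε, ← mul_pow]; norm_num
      -- build the violating function
      set f : V →₀ ℂ := Finsupp.single x (-ε) + Finsupp.single y (-ε) + Finsupp.single z 1
        with hf
      have hsupp : f.support ⊆ {x, y, z} := by
        refine (Finsupp.support_add).trans ?_
        refine Finset.union_subset ((Finsupp.support_add).trans ?_) ?_
        · exact Finset.union_subset
            ((Finsupp.support_single_subset).trans (by intro a ha; simp at ha; simp [ha]))
            ((Finsupp.support_single_subset).trans (by intro a ha; simp at ha; simp [ha]))
        · exact (Finsupp.support_single_subset).trans (by intro a ha; simp at ha; simp [ha])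
      have hfx : f x = -ε := by
        simp [hf, Finsupp.single_apply, hxyne, Ne.symm hxyne, hzx, Ne.symm hzx]
      have hfy : f y = -ε := by
        simp [hf, Finsupp.single_apply, hxyne, Ne.symm hxyne, hzy, Ne.symm hzy]
      have hfz : f z = 1 := by
        simp [hf, Finsupp.single_apply, hzx, Ne.symm hzx, hzy, Ne.symm hzy]
      have hle := qpsd_sum_superset G (-1) hpsd f {x, y, z} hsupp
      have hxny : x ∉ ({y, z} : Finset V) := by simp [hxyne, Ne.symm hzx]
      have hynz : y ∉ ({z} : Finset V) := by simp [Ne.symm hzy]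
      rw [show ({x, y, z} : Finset V) = insert x (insert y {z}) from rfl] at hle
      rw [Finset.sum_insert hxny] at hle
      rw [Finset.sum_insert hynz] at hle
      simp only [Finset.sum_insert hxny, Finset.sum_insert hynz, Finset.sum_singleton] at hle
      rw [hfx, hfy, hfz] at hle
      push_cast at hle
      rw [show G.dist z x = G.dist x z from SimpleGraph.dist_comm ..,
        show G.dist z y = G.dist y z from SimpleGraph.dist_comm ..] at hle
      simp only [hdxy, hdyx, SimpleGraph.dist_self, pow_zero, pow_one] at hle
      rw [heq, ← hε, map_neg, map_one, hstar] at hle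
      rw [show -ε * -ε * 1 + (-ε * -ε * -1 + -ε * 1 * ε) +
          (-ε * -ε * -1 + (-ε * -ε * 1 + -ε * 1 * ε) + (1 * -ε * ε + (1 * -ε * ε + 1 * 1 * 1)))
          = (-3 : ℂ) from by linear_combination (-4 : ℂ) * hε2] at hle
      have h3 : (0 : ℝ) ≤ -3 := by exact_mod_cast hle
      linarith
    -- build the 2-coloring
    obtain ⟨v₀⟩ := hconn.nonempty
    refine ⟨SimpleGraph.Coloring.mk (fun v => ⟨G.dist v₀ v % 2, Nat.mod_lt _ two_pos⟩) ?_⟩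
    intro x y hxy hc
    have hmod : G.dist v₀ x % 2 = G.dist v₀ y % 2 := congrArg Fin.val hc
    have h1 := key x y v₀ hxy
    rw [show G.dist x v₀ = G.dist v₀ x from SimpleGraph.dist_comm ..,
      show G.dist y v₀ = G.dist v₀ y from SimpleGraph.dist_comm ..,
      neg_one_pow_mod_two, neg_one_pow_mod_two (G.dist v₀ y), hmod] at h1
    have : (-1 : ℂ) ^ (G.dist v₀ y % 2) = 0 := by linear_combination h1 / 2
    simp [pow_eq_zero_iff] at this
  · rintro ⟨C⟩ f
    set sgn : V → ℂ := fun v => (-1 : ℂ) ^ (C v : ℕ) with hsgn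
    have hfin : ∀ a : Fin 2, a = 0 ∨ a = 1 := by decide
    have hadj : ∀ a b : V, C a ≠ C b → sgn a = -sgn b := by
      intro a b hne
      rcases hfin (C a) with h1 | h1 <;> rcases hfin (C b) with h2 | h2 <;>
        simp only [hsgn] <;> rw [h1, h2] at hne ⊢ <;>
        first
          | exact absurd rfl hne
          | norm_num [Fin.val_zero, Fin.val_one]
    have hwalk : ∀ {u v : V} (p : G.Walk u v), sgn u = (-1) ^ p.length * sgn v := by
      intro u v p
      induction p with
      | nil => simp
      | cons h p ih =>
        rename_i a b c
        rw [hadj a b (C.valid h), ih, SimpleGraph.Walk.length_cons, pow_succ]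
        ring
    have hsq : ∀ v, sgn v * sgn v = 1 := fun v => by
      rw [hsgn]; simp [← mul_pow]
    have hdist : ∀ x y : V, (-1 : ℂ) ^ G.dist x y = sgn x * sgn y := by
      intro x y
      obtain ⟨p, hp⟩ := hconn.exists_walk_length_eq_dist x y
      have := hwalk p
      rw [hp] at this
      calc (-1 : ℂ) ^ G.dist x y = (-1 : ℂ) ^ G.dist x y * (sgn y * sgn y) := by
            rw [hsq]; ring
        _ = sgn x * sgn y := by rw [← mul_assoc, ← this]
    have hstar : ∀ v, (starRingEnd ℂ) (sgn v) = sgn v := fun v => by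
      rw [hsgn]; rw [map_pow]; norm_num
    have : ∑ x ∈ f.support, ∑ y ∈ f.support,
        (starRingEnd ℂ) (f x) * f y * ((-1 : ℝ) : ℂ) ^ G.dist x y
        = (starRingEnd ℂ) (∑ x ∈ f.support, f x * sgn x) * (∑ y ∈ f.support, f y * sgn y) := by
      rw [map_sum, Finset.sum_mul_sum]
      refine Finset.sum_congr rfl fun x _ => Finset.sum_congr rfl fun y _ => ?_
      rw [map_mul, hstar]
      push_cast
      rw [hdist]
      ring
    rw [this]
    exact star_mul_self_nonneg _
end

section
/- Let Γ = (X,d) be a metric space. If for every q ∈ [0,1] the matrix (q^{d(x,y)})_{x,y∈X} is positive semidefinite, then d is a negative definite kernel on X: ∑_{x,y} conj(f(x)) f(y) d(x,y) ≤ 0 for every finitely supported f : X → ℂ with ∑_x f(x) = 0. -/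
open scoped ComplexOrder

/-- A real-valued kernel `d` is negative definite if the associated quadratic form is
nonpositive on finitely supported functions summing to zero. -/
def NegDefKer {X : Type*} (d : X → X → ℝ) : Prop :=
  ∀ f : X →₀ ℂ, (∑ x ∈ f.support, f x) = 0 →
    ∑ x ∈ f.support, ∑ y ∈ f.support,
      (starRingEnd ℂ) (f x) * f y * ((d x y : ℝ) : ℂ) ≤ 0

/-!
For fixed `f` with `∑ f = 0`, the form `Q(q) = ∑ conj (f x) f y q ^ d(x, y)` is `≥ 0` for
`q ∈ (0, 1)` and vanishes at `q = 1`, so its left difference quotients at `1` are `≤ 0`; their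
limit is `Q'(1) = ∑ conj (f x) f y d(x, y)`. Since `ComplexOrder` is closed and compatible with
real scalars, the argument runs in `ℂ` itself, with no separate proof that the forms are real.
-/

open Filter Topology

theorem HasDerivAt.nonpos_of_eventually_nonneg_left {E : Type*} [NormedAddCommGroup E]
    [NormedSpace ℝ E] [PartialOrder E] [ClosedIicTopology E] [SMulPosMono ℝ E]
    {F : ℝ → E} {F' : E} {a : ℝ} (hF : HasDerivAt F F' a) (hFa : F a = 0)
    (hnonneg : ∀ᶠ q in 𝓝[<] a, 0 ≤ F q) : F' ≤ 0 := by
  refine le_of_tendsto ((hasDerivAt_iff_tendsto_slope_left_right.mp hF).1) ?_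
  filter_upwards [hnonneg, self_mem_nhdsWithin] with q hq (hqa : q < a)
  rw [slope_def_module, hFa, sub_zero]
  exact smul_nonpos_of_nonpos_of_nonneg (inv_nonpos.mpr (sub_neg.mpr hqa).le) hq

section KernelForm

variable {X : Type*} (f : X →₀ ℂ)

def kernelForm (k : X → X → ℝ) : ℂ :=
  ∑ x ∈ f.support, ∑ y ∈ f.support, (starRingEnd ℂ) (f x) * f y * ((k x y : ℝ) : ℂ)

theorem kernelForm_one : kernelForm f (fun _ _ => 1) =
    (starRingEnd ℂ) (∑ x ∈ f.support, f x) * ∑ x ∈ f.support, f x := by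
  simp [kernelForm, map_sum, Finset.sum_mul_sum]

theorem hasDerivAt_kernelForm_rpow (k : X → X → ℝ) :
    HasDerivAt (fun q : ℝ => kernelForm f fun x y => q ^ k x y) (kernelForm f k) 1 := by
  refine HasDerivAt.fun_sum fun x _ => HasDerivAt.fun_sum fun y _ => ?_
  simpa using ((Real.hasDerivAt_rpow_const (x := 1) (p := k x y)
    (.inl one_ne_zero)).ofReal_comp).const_mul ((starRingEnd ℂ) (f x) * f y)

end KernelForm

theorem stmt11 {X : Type*} [MetricSpace X]
    (hpsd : ∀ q ∈ Set.Icc (0 : ℝ) 1, ∀ f : X →₀ ℂ,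
      0 ≤ ∑ x ∈ f.support, ∑ y ∈ f.support,
        (starRingEnd ℂ) (f x) * f y * ((q ^ dist x y : ℝ) : ℂ)) :
    NegDefKer (fun x y : X => dist x y) := by
  intro f hf
  refine (hasDerivAt_kernelForm_rpow f fun x y => dist x y).nonpos_of_eventually_nonneg_left
    ?_ ?_
  · simpa [hf] using kernelForm_one f
  · filter_upwards [Ioo_mem_nhdsLT zero_lt_one] with q hq
    exact hpsd q (Set.Ioo_subset_Icc_self hq) f
end

section
/- Let G be a connected graph and let x₁,x₂,x₃,x₄,x₅ be vertices with x₁ ~ x₂, x₃ ~ x₄, ∂(x₁,x₃) = ∂(x₂,x₃) − 1 = i, ∂(x₁,x₄) = i+1, ∂(x₂,x₄) = i, ∂(x₁,x₅) = ∂(x₂,x₅) − 1 = j, and ∂(x₄,x₅) = ∂(x₃,x₅) − 1 = h. Then setting ξ₁ = ξ₄ = −(j+h+2), ξ₂ = ξ₃ = j+h, ξ₅ = 4, we have ∑_a ξ_a = 0 and ∑_{a,b=1}^{5} ξ_a ξ_b ∂(x_a,x_b) = 8(i+1) > 0; in particular ∂ is not a negative definite kernel on V. -/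
open scoped ComplexOrder

lemma finsupp_supp_sub {V : Type*} {n : ℕ} [DecidableEq V] (g : Fin n → V) (c : Fin n → ℂ) :
    (∑ a, Finsupp.single (g a) (c a)).support ⊆ Finset.univ.image g := by
  classical
  intro v hv
  have hne := Finsupp.mem_support_iff.mp hv
  by_contra hvs
  apply hne
  simp only [Finsupp.finset_sum_apply, Finsupp.single_apply]
  apply Finset.sum_eq_zero
  intro a _
  have : g a ≠ v := fun e => hvs (by simp [← e])
  simp [this]

lemma finsupp_collapse {V : Type*} {n : ℕ} [DecidableEq V] (g : Fin n → V) (c : Fin n → ℂ) (t : V → ℂ) :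
    ∑ v ∈ Finset.univ.image g, (∑ a, Finsupp.single (g a) (c a)) v * t v
      = ∑ b, c b * t (g b) := by
  classical
  simp only [Finsupp.finset_sum_apply, Finsupp.single_apply, Finset.sum_mul, ite_mul, zero_mul]
  rw [Finset.sum_comm]
  refine Finset.sum_congr rfl fun b _ => ?_
  rw [Finset.sum_ite_eq]
  simp

lemma finsupp_collapse_conj {V : Type*} {n : ℕ} [DecidableEq V] (g : Fin n → V) (c : Fin n → ℂ) (t : V → ℂ) :
    ∑ v ∈ Finset.univ.image g, (starRingEnd ℂ) ((∑ a, Finsupp.single (g a) (c a)) v) * t v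
      = ∑ b, (starRingEnd ℂ) (c b) * t (g b) := by
  classical
  simp only [Finsupp.finset_sum_apply, Finsupp.single_apply, map_sum, apply_ite, map_zero,
    Finset.sum_mul, ite_mul, zero_mul]
  rw [Finset.sum_comm]
  refine Finset.sum_congr rfl fun b _ => ?_
  rw [Finset.sum_ite_eq]
  simp

lemma finsupp_total {V : Type*} {n : ℕ} [DecidableEq V] (g : Fin n → V) (c : Fin n → ℂ) :
    ∑ v ∈ (∑ a, Finsupp.single (g a) (c a)).support, (∑ a, Finsupp.single (g a) (c a)) v
      = ∑ a, c a := by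
  classical
  rw [Finset.sum_subset (finsupp_supp_sub g c)
    (fun v _ hv => Finsupp.notMem_support_iff.mp hv)]
  have := finsupp_collapse g c (fun _ => 1)
  simpa using this

lemma finsupp_quad {V : Type*} {n : ℕ} [DecidableEq V] (g : Fin n → V) (c : Fin n → ℂ) (d : V → V → ℂ) :
    ∑ u ∈ (∑ a, Finsupp.single (g a) (c a)).support,
      ∑ v ∈ (∑ a, Finsupp.single (g a) (c a)).support,
        (starRingEnd ℂ) ((∑ a, Finsupp.single (g a) (c a)) u)
          * (∑ a, Finsupp.single (g a) (c a)) v * d u v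
      = ∑ a, ∑ b, (starRingEnd ℂ) (c a) * c b * d (g a) (g b) := by
  classical
  set f : V →₀ ℂ := ∑ a, Finsupp.single (g a) (c a) with hfdef
  set s : Finset V := Finset.univ.image g with hs
  have hsub : f.support ⊆ s := finsupp_supp_sub g c
  rw [Finset.sum_subset hsub (by
    intro u _ hu
    apply Finset.sum_eq_zero
    intro v _
    rw [Finsupp.notMem_support_iff.mp hu]
    simp)]
  have hinner : ∀ u ∈ s, ∑ v ∈ f.support, (starRingEnd ℂ) (f u) * f v * d u v
      = ∑ v ∈ s, (starRingEnd ℂ) (f u) * f v * d u v := fun u _ =>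
    Finset.sum_subset hsub (by
      intro v _ hv
      rw [Finsupp.notMem_support_iff.mp hv]
      simp)
  rw [Finset.sum_congr rfl hinner]
  calc ∑ u ∈ s, ∑ v ∈ s, (starRingEnd ℂ) (f u) * f v * d u v
      = ∑ u ∈ s, (starRingEnd ℂ) (f u) * ∑ b, c b * d u (g b) := by
        refine Finset.sum_congr rfl fun u _ => ?_
        rw [← finsupp_collapse g c (fun v => d u v), Finset.mul_sum]
        exact Finset.sum_congr rfl fun v _ => (mul_assoc _ _ _)
    _ = ∑ b, ∑ u ∈ s, (starRingEnd ℂ) (f u) * (c b * d u (g b)) := by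
        simp_rw [Finset.mul_sum]
        exact Finset.sum_comm
    _ = ∑ b, ∑ a, (starRingEnd ℂ) (c a) * (c b * d (g a) (g b)) := by
        refine Finset.sum_congr rfl fun b _ => ?_
        exact finsupp_collapse_conj g c (fun u => c b * d u (g b))
    _ = ∑ a, ∑ b, (starRingEnd ℂ) (c a) * c b * d (g a) (g b) := by
        rw [Finset.sum_comm]
        exact Finset.sum_congr rfl fun a _ => Finset.sum_congr rfl fun b _ =>
          (mul_assoc _ _ _).symm

theorem stmt12 {V : Type*} (G : SimpleGraph V) (hconn : G.Connected)
    (x₁ x₂ x₃ x₄ x₅ : V) (i j h : ℕ)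
    (h12 : G.Adj x₁ x₂) (h34 : G.Adj x₃ x₄)
    (d13 : G.dist x₁ x₃ = i) (d23 : G.dist x₂ x₃ = i + 1)
    (d14 : G.dist x₁ x₄ = i + 1) (d24 : G.dist x₂ x₄ = i)
    (d15 : G.dist x₁ x₅ = j) (d25 : G.dist x₂ x₅ = j + 1)
    (d45 : G.dist x₄ x₅ = h) (d35 : G.dist x₃ x₅ = h + 1) :
    let x : Fin 5 → V := ![x₁, x₂, x₃, x₄, x₅]
    let ξ : Fin 5 → ℝ :=
      ![-((j : ℝ) + h + 2), (j : ℝ) + h, (j : ℝ) + h, -((j : ℝ) + h + 2), 4]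
    (∑ a, ξ a = 0) ∧
    (∑ a, ∑ b, ξ a * ξ b * (G.dist (x a) (x b) : ℝ) = 8 * ((i : ℝ) + 1)) ∧
    (0 < 8 * ((i : ℝ) + 1)) ∧
    ¬ NegDefKer (fun u v : V => (G.dist u v : ℝ)) := by
  classical
  intro x ξ
  have d12 : G.dist x₁ x₂ = 1 := SimpleGraph.dist_eq_one_iff_adj.mpr h12
  have d34 : G.dist x₃ x₄ = 1 := SimpleGraph.dist_eq_one_iff_adj.mpr h34
  have h1 : ∑ a, ξ a = 0 := by
    simp only [ξ, Fin.sum_univ_five, Matrix.cons_val_zero, Matrix.cons_val_one,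
      Matrix.head_cons, Matrix.cons_val_two, Matrix.tail_cons, Matrix.cons_val_three,
      Matrix.cons_val_four, Matrix.head_fin_const]
    ring
  have h2 : ∑ a, ∑ b, ξ a * ξ b * (G.dist (x a) (x b) : ℝ) = 8 * ((i : ℝ) + 1) := by
    simp only [x, ξ, Fin.sum_univ_five, Matrix.cons_val_zero, Matrix.cons_val_one,
      Matrix.head_cons, Matrix.cons_val_two, Matrix.tail_cons, Matrix.cons_val_three,
      Matrix.cons_val_four, Matrix.head_fin_const]
    rw [G.dist_comm (u := x₂) (v := x₁), G.dist_comm (u := x₃) (v := x₁), G.dist_comm (u := x₃) (v := x₂), G.dist_comm (u := x₄) (v := x₁),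
      G.dist_comm (u := x₄) (v := x₂), G.dist_comm (u := x₄) (v := x₃), G.dist_comm (u := x₅) (v := x₁), G.dist_comm (u := x₅) (v := x₂),
      G.dist_comm (u := x₅) (v := x₃), G.dist_comm (u := x₅) (v := x₄), d12, d34, d13, d23, d14, d24, d15, d25, d45, d35,
      G.dist_self, G.dist_self, G.dist_self, G.dist_self, G.dist_self]
    push_cast
    ring
  have h3 : (0:ℝ) < 8 * ((i : ℝ) + 1) := by positivity
  refine ⟨h1, h2, h3, ?_⟩
  intro hN
  set c : Fin 5 → ℂ := fun a => ((ξ a : ℝ) : ℂ) with hc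
  have hsum : ∑ v ∈ (∑ a, Finsupp.single (x a) (c a)).support,
      (∑ a, Finsupp.single (x a) (c a)) v = 0 := by
    rw [finsupp_total]
    simp only [hc, ← Complex.ofReal_sum, h1, Complex.ofReal_zero]
  have hQ := hN (∑ a, Finsupp.single (x a) (c a)) hsum
  rw [finsupp_quad x c (fun u v => ((G.dist u v : ℝ) : ℂ))] at hQ
  have heq : ∑ a, ∑ b, (starRingEnd ℂ) (c a) * c b * ((G.dist (x a) (x b) : ℝ) : ℂ)
      = ((8 * ((i : ℝ) + 1) : ℝ) : ℂ) := by
    rw [← h2]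
    push_cast [hc, Complex.conj_ofReal]
    ring
  rw [heq] at hQ
  have : (0:ℝ) < 0 := lt_of_lt_of_le h3 (by exact_mod_cast hQ)
  exact lt_irrefl _ this
end

section
/- If a connected simple graph G admits an isometric embedding into a hypercube Q_Σ (a map θ : V → vertices of Q_Σ with |θ(x) △ θ(y)| = ∂(x,y)), then for every q ∈ [−1,1] the matrix Q_q = (q^{∂(x,y)})_{x,y∈V} is positive semidefinite. -/
open scoped ComplexOrder

theorem stmt16 {V σ : Type*} [DecidableEq σ] (G : SimpleGraph V) (hconn : G.Connected)
    (θ : V → Finset σ)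
    (hθ : ∀ x y : V, (symmDiff (θ x) (θ y)).card = G.dist x y)
    (q : ℝ) (hq : q ∈ Set.Icc (-1 : ℝ) 1) :
    QPSD G q := by
  intro f
  classical
  obtain ⟨hq1, hq2⟩ := hq
  set S : Finset σ := f.support.biUnion θ with hSdef
  have hsub : ∀ x ∈ f.support, θ x ⊆ S := fun x hx => Finset.subset_biUnion_of_mem θ hx
  set a2 : ℝ := (1 + q) / 2 with ha2def
  set b2 : ℝ := (1 - q) / 2 with hb2def
  have ha2 : 0 ≤ a2 := by simp only [ha2def]; linarith
  have hb2 : 0 ≤ b2 := by simp only [hb2def]; linarith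
  set ψ : V → Finset σ → ℝ := fun x T =>
    Real.sqrt b2 ^ T.card * Real.sqrt a2 ^ (S \ T).card * (-1 : ℝ) ^ (T ∩ θ x).card with hψdef
  have hsign : ∀ (A T : Finset σ), (-1 : ℝ) ^ (T ∩ A).card
      = ∏ s ∈ T, (if s ∈ A then (-1 : ℝ) else 1) := by
    intro A T
    rw [Finset.prod_ite_mem, Finset.prod_const]
  have key : ∀ x ∈ f.support, ∀ y ∈ f.support,
      ∑ T ∈ S.powerset, ψ x T * ψ y T = q ^ G.dist x y := by
    intro x hx y hy
    have hABsub : symmDiff (θ x) (θ y) ⊆ S := by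
      intro s hs
      rcases Finset.mem_symmDiff.1 hs with ⟨h1, _⟩ | ⟨h1, _⟩
      · exact hsub x hx h1
      · exact hsub y hy h1
    calc ∑ T ∈ S.powerset, ψ x T * ψ y T
        = ∑ T ∈ S.powerset,
            (∏ s ∈ T, (b2 * (if s ∈ symmDiff (θ x) (θ y) then (-1 : ℝ) else 1)))
              * ∏ s ∈ S \ T, a2 := by
          refine Finset.sum_congr rfl fun T hT => ?_
          have hb : Real.sqrt b2 ^ T.card * Real.sqrt b2 ^ T.card = b2 ^ T.card := by
            rw [← mul_pow, Real.mul_self_sqrt hb2]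
          have ha : Real.sqrt a2 ^ (S \ T).card * Real.sqrt a2 ^ (S \ T).card
              = a2 ^ (S \ T).card := by
            rw [← mul_pow, Real.mul_self_sqrt ha2]
          have hε : ∀ s : σ, (if s ∈ symmDiff (θ x) (θ y) then (-1 : ℝ) else 1)
              = (if s ∈ θ x then (-1 : ℝ) else 1) * (if s ∈ θ y then (-1 : ℝ) else 1) := by
            intro s
            by_cases h1 : s ∈ θ x <;> by_cases h2 : s ∈ θ y <;>
              simp [Finset.mem_symmDiff, h1, h2]
          have : ψ x T * ψ y T = (b2 ^ T.card * a2 ^ (S \ T).card)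
              * ((-1 : ℝ) ^ (T ∩ θ x).card * (-1 : ℝ) ^ (T ∩ θ y).card) := by
            simp only [hψdef]
            rw [← hb, ← ha]; ring
          have h2 : (∏ s ∈ T, (b2 * (if s ∈ symmDiff (θ x) (θ y) then (-1 : ℝ) else 1)))
              = b2 ^ T.card * ((∏ s ∈ T, (if s ∈ θ x then (-1 : ℝ) else 1))
                * ∏ s ∈ T, (if s ∈ θ y then (-1 : ℝ) else 1)) := by
            simp_rw [hε]
            rw [Finset.prod_mul_distrib, Finset.prod_mul_distrib, Finset.prod_const]
          rw [this, hsign, hsign, h2, Finset.prod_const]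
          ring
      _ = ∏ s ∈ S, (b2 * (if s ∈ symmDiff (θ x) (θ y) then (-1 : ℝ) else 1) + a2) :=
          (Finset.prod_add _ _ _).symm
      _ = q ^ G.dist x y := by
          have : ∀ s : σ, b2 * (if s ∈ symmDiff (θ x) (θ y) then (-1 : ℝ) else 1) + a2
              = (if s ∈ symmDiff (θ x) (θ y) then q else 1) := by
            intro s
            by_cases h : s ∈ symmDiff (θ x) (θ y) <;> simp [h, ha2def, hb2def] <;> ring
          simp only [this]
          rw [Finset.prod_ite_mem, Finset.prod_const,
            Finset.inter_eq_right.2 hABsub, hθ]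
  -- now the complex sum
  have main : ∑ x ∈ f.support, ∑ y ∈ f.support,
      (starRingEnd ℂ) (f x) * f y * (q : ℂ) ^ G.dist x y
      = ∑ T ∈ S.powerset,
          star (∑ x ∈ f.support, f x * (ψ x T : ℂ)) * (∑ y ∈ f.support, f y * (ψ y T : ℂ)) := by
    have step : ∀ x ∈ f.support, ∀ y ∈ f.support,
        (starRingEnd ℂ) (f x) * f y * (q : ℂ) ^ G.dist x y
        = ∑ T ∈ S.powerset, star (f x * (ψ x T : ℂ)) * (f y * (ψ y T : ℂ)) := by
      intro x hx y hy
      have : ((q : ℂ)) ^ G.dist x y = ∑ T ∈ S.powerset, (ψ x T : ℂ) * (ψ y T : ℂ) := by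
        exact_mod_cast (congrArg Complex.ofReal (key x hx y hy)).symm
      rw [this, Finset.mul_sum]
      refine Finset.sum_congr rfl fun T hT => ?_
      simp [star_mul', Complex.conj_ofReal]
      ring
    calc ∑ x ∈ f.support, ∑ y ∈ f.support,
          (starRingEnd ℂ) (f x) * f y * (q : ℂ) ^ G.dist x y
        = ∑ x ∈ f.support, ∑ y ∈ f.support, ∑ T ∈ S.powerset,
            star (f x * (ψ x T : ℂ)) * (f y * (ψ y T : ℂ)) := by
          refine Finset.sum_congr rfl fun x hx => Finset.sum_congr rfl fun y hy => ?_
          exact step x hx y hy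
      _ = ∑ T ∈ S.powerset, ∑ x ∈ f.support, ∑ y ∈ f.support,
            star (f x * (ψ x T : ℂ)) * (f y * (ψ y T : ℂ)) := by
          rw [show (∑ x ∈ f.support, ∑ y ∈ f.support, ∑ T ∈ S.powerset,
              star (f x * (ψ x T : ℂ)) * (f y * (ψ y T : ℂ)))
              = ∑ x ∈ f.support, ∑ T ∈ S.powerset, ∑ y ∈ f.support,
              star (f x * (ψ x T : ℂ)) * (f y * (ψ y T : ℂ)) from
            Finset.sum_congr rfl fun x _ => Finset.sum_comm]
          exact Finset.sum_comm
      _ = ∑ T ∈ S.powerset,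
            star (∑ x ∈ f.support, f x * (ψ x T : ℂ)) * (∑ y ∈ f.support, f y * (ψ y T : ℂ)) := by
          refine Finset.sum_congr rfl fun T _ => ?_
          rw [star_sum, Finset.sum_mul_sum]
  rw [main]
  refine Finset.sum_nonneg fun T _ => star_mul_self_nonneg _
end

section
/- Let (W,S) be a Coxeter system with positive root system Π, and define θ(x) = Π ∩ x^{-1}(−Π) for x ∈ W. Then for all x, y ∈ W, the symmetric difference θ(x) △ θ(y) has cardinality ℓ(yx^{-1}), the Coxeter length of yx^{-1}. In particular, x ↦ θ(x) is an isometric embedding of the Cayley graph of (W,S) into the hypercube Q_Π, and consequently for every q ∈ [−1,1] the matrix (q^{ℓ(yx^{-1})})_{x,y∈W} is positive semidefinite. -/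
open scoped ComplexOrder

/-!
Pull `θ(y x⁻¹)` back along `x`: a root `α` is sent by `x` to a positive root and by `y` to a
negative one exactly when `α ∈ θ(y) \ θ(x)` (for `α` positive) or `-α ∈ θ(x) \ θ(y)` (for `α`
negative), so `|θ(y x⁻¹)| = |θ(x) ∆ θ(y)|`.

For positive semidefiniteness, expand over the characters `χ_T(A) = (-1) ^ |T ∩ A|` of the cube
`2 ^ U`: for `A, B ⊆ U`,
`q ^ |A ∆ B| = ∑_{T ⊆ U} ((1 - q) / 2) ^ |T| ((1 + q) / 2) ^ |U \ T| χ_T(A) χ_T(B)`,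
a combination of rank-one kernels with weights that are nonnegative exactly when `|q| ≤ 1`.
-/

open Finset

lemma mem_iff_notMem_neg_of_mem_union {V : Type*} [InvolutiveNeg V] {Pos : Set V}
    (hdisj : Disjoint Pos (-Pos)) {u : V} (hu : u ∈ Pos ∪ -Pos) : u ∈ Pos ↔ u ∉ -Pos :=
  ⟨fun h => Set.disjoint_left.1 hdisj h, hu.resolve_right⟩

section InversionSet

variable {W R V : Type*} [Group W] [Semiring R] [AddCommGroup V] [Module R V]
  (ρ : W →* (V ≃ₗ[R] V)) {Pos : Set V}

def inversionSet (Pos : Set V) (x : W) : Set V := Pos ∩ ρ x ⁻¹' (-Pos)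

variable {ρ}

lemma preimage_inversionSet_mul_inv (hdisj : Disjoint Pos (-Pos))
    (hroots : ∀ w, Set.MapsTo (ρ w) (Pos ∪ -Pos) (Pos ∪ -Pos)) (x y : W) :
    ρ x ⁻¹' inversionSet ρ Pos (y * x⁻¹) =
      (inversionSet ρ Pos y \ inversionSet ρ Pos x) ∪
        -(inversionSet ρ Pos x \ inversionSet ρ Pos y) := by
  ext α
  have hcomp : ρ (y * x⁻¹) (ρ x α) = ρ y α := by simp
  simp only [Set.mem_preimage, inversionSet, Set.mem_union, Set.mem_sdiff, Set.mem_inter_iff,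
    Set.mem_neg, map_neg, neg_neg, hcomp]
  by_cases hα : α ∈ Pos ∪ -Pos
  · have h := mem_iff_notMem_neg_of_mem_union hdisj hα
    have hx := mem_iff_notMem_neg_of_mem_union hdisj (hroots x hα)
    have hy := mem_iff_notMem_neg_of_mem_union hdisj (hroots y hα)
    simp only [Set.mem_neg] at h hx hy
    tauto
  · have hback : ρ x α ∉ Pos := fun h => hα (by simpa using hroots x⁻¹ (Or.inl h))
    simp only [Set.mem_union, Set.mem_neg, not_or] at hα
    tauto

lemma ncard_symmDiff_inversionSet (hdisj : Disjoint Pos (-Pos))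
    (hroots : ∀ w, Set.MapsTo (ρ w) (Pos ∪ -Pos) (Pos ∪ -Pos))
    (hfin : ∀ x, (inversionSet ρ Pos x).Finite) (x y : W) :
    (symmDiff (inversionSet ρ Pos x) (inversionSet ρ Pos y)).ncard =
      (inversionSet ρ Pos (y * x⁻¹)).ncard := by
  set θ := inversionSet ρ Pos
  have hsep : Disjoint (θ y \ θ x) (-(θ x \ θ y)) :=
    hdisj.mono (fun _ h => h.1.1) (fun _ h => h.1.1)
  calc (symmDiff (θ x) (θ y)).ncard = (θ y \ θ x).ncard + (θ x \ θ y).ncard := by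
        rw [Set.symmDiff_def, Set.ncard_union_eq disjoint_sdiff_sdiff (hfin x).sdiff (hfin y).sdiff,
          add_comm]
    _ = ((θ y \ θ x) ∪ -(θ x \ θ y)).ncard := by
        rw [Set.ncard_union_eq hsep (hfin y).sdiff (hfin x).sdiff.neg, Set.ncard_neg]
    _ = (θ (y * x⁻¹)).ncard := by
        rw [← preimage_inversionSet_mul_inv hdisj hroots x y,
          Set.ncard_preimage_of_injective_subset_range (ρ x).injective
            (by simp [(ρ x).surjective.range_eq])]

end InversionSet

section PositiveSemidefinite

lemma quadForm_nonneg_of_eq_sum_rankOne {W τ : Type*} (s : Finset W) (f : W → ℂ)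
    (K : W → W → ℝ) (t : Finset τ) (w : τ → ℝ) (g : τ → W → ℝ) (hw : ∀ T ∈ t, 0 ≤ w T)
    (hK : ∀ x ∈ s, ∀ y ∈ s, K x y = ∑ T ∈ t, w T * (g T x * g T y)) :
    0 ≤ ∑ x ∈ s, ∑ y ∈ s, (starRingEnd ℂ) (f x) * f y * (K x y : ℂ) := by
  have hexpand : ∑ x ∈ s, ∑ y ∈ s, (starRingEnd ℂ) (f x) * f y * (K x y : ℂ) =
      ∑ T ∈ t, (w T : ℂ) *
        ((starRingEnd ℂ) (∑ x ∈ s, f x * g T x) * ∑ y ∈ s, f y * g T y) :=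
    calc ∑ x ∈ s, ∑ y ∈ s, (starRingEnd ℂ) (f x) * f y * (K x y : ℂ)
        = ∑ x ∈ s, ∑ y ∈ s, ∑ T ∈ t,
            (w T : ℂ) * ((starRingEnd ℂ) (f x * g T x) * (f y * g T y)) := by
          refine sum_congr rfl fun x hx => sum_congr rfl fun y hy => ?_
          rw [hK x hx y hy, Complex.ofReal_sum, mul_sum]
          refine sum_congr rfl fun T _ => ?_
          simp only [map_mul, Complex.conj_ofReal, Complex.ofReal_mul]
          ring
      _ = ∑ T ∈ t, ∑ x ∈ s, ∑ y ∈ s,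
            (w T : ℂ) * ((starRingEnd ℂ) (f x * g T x) * (f y * g T y)) := by
          exact (sum_congr rfl fun _ _ => sum_comm).trans sum_comm
      _ = _ := by simp_rw [map_sum, sum_mul_sum, mul_sum]
  rw [hexpand]
  refine sum_nonneg fun T hT => mul_nonneg (Complex.zero_le_real.2 (hw T hT)) ?_
  rw [Complex.conj_mul', ← Complex.ofReal_pow, Complex.zero_le_real]
  positivity

variable {ι : Type*} [DecidableEq ι]

def signChar (T A : Finset ι) : ℝ := ∏ α ∈ T, if α ∈ A then -1 else 1

lemma signChar_mul_signChar (T A B : Finset ι) :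
    signChar T A * signChar T B = signChar T (symmDiff A B) := by
  rw [signChar, signChar, signChar, ← prod_mul_distrib]
  refine prod_congr rfl fun α _ => ?_
  by_cases hA : α ∈ A <;> by_cases hB : α ∈ B <;> simp [hA, hB, mem_symmDiff]

noncomputable def cubeWeight (q : ℝ) (U T : Finset ι) : ℝ :=
  ((1 - q) / 2) ^ #T * ((1 + q) / 2) ^ #(U \ T)

lemma cubeWeight_nonneg {q : ℝ} (hq : q ∈ Set.Icc (-1 : ℝ) 1) (U T : Finset ι) :
    0 ≤ cubeWeight q U T := by
  obtain ⟨hq₁, hq₂⟩ := hq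
  unfold cubeWeight
  have : 0 ≤ (1 - q) / 2 := by linarith
  have : 0 ≤ (1 + q) / 2 := by linarith
  positivity

lemma sum_cubeWeight_mul_signChar (q : ℝ) {S U : Finset ι} (hSU : S ⊆ U) :
    ∑ T ∈ U.powerset, cubeWeight q U T * signChar T S = q ^ #S :=
  calc ∑ T ∈ U.powerset, cubeWeight q U T * signChar T S
      = ∑ T ∈ U.powerset, (∏ α ∈ T, (1 - q) / 2 * (if α ∈ S then -1 else 1)) *
          ∏ _α ∈ U \ T, (1 + q) / 2 := by
        refine sum_congr rfl fun T _ => ?_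
        rw [cubeWeight, signChar, prod_mul_distrib, prod_const, prod_const]
        ring
    _ = ∏ α ∈ U, ((1 - q) / 2 * (if α ∈ S then -1 else 1) + (1 + q) / 2) :=
        (prod_add _ _ U).symm
    _ = ∏ α ∈ U, if α ∈ S then q else 1 :=
        prod_congr rfl fun α _ => by split_ifs <;> ring
    _ = q ^ #S := by rw [prod_ite_mem, inter_eq_right.2 hSU, prod_const]

lemma quadForm_pow_card_symmDiff_nonneg {W : Type*} (A : W → Finset ι) {q : ℝ}
    (hq : q ∈ Set.Icc (-1 : ℝ) 1) (s : Finset W) (f : W → ℂ) :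
    0 ≤ ∑ x ∈ s, ∑ y ∈ s, (starRingEnd ℂ) (f x) * f y * (q : ℂ) ^ #(symmDiff (A x) (A y)) := by
  have hsub : ∀ x ∈ s, A x ⊆ s.biUnion A := fun x hx => subset_biUnion_of_mem A hx
  have := quadForm_nonneg_of_eq_sum_rankOne s f (fun x y => q ^ #(symmDiff (A x) (A y)))
    (s.biUnion A).powerset (cubeWeight q (s.biUnion A)) (fun T x => signChar T (A x))
    (fun T _ => cubeWeight_nonneg hq _ T) fun x hx y hy => by
      simp only [signChar_mul_signChar]
      exact (sum_cubeWeight_mul_signChar q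
        (symmDiff_le_sup.trans (union_subset (hsub x hx) (hsub y hy)))).symm
  simpa only [Complex.ofReal_pow] using this

end PositiveSemidefinite

theorem stmt19 {B W : Type*} [Group W] {M : CoxeterMatrix B} (cs : CoxeterSystem M W)
    {V : Type*} [AddCommGroup V] [Module ℝ V]
    (ρ : W →* (V ≃ₗ[ℝ] V)) (Pos : Set V)
    (hdisj : Disjoint Pos (-Pos))
    (hinv : ∀ w : W, (ρ w) '' (Pos ∪ -Pos) = Pos ∪ -Pos)
    (hfin : ∀ x : W, (Pos ∩ (ρ x) ⁻¹' (-Pos)).Finite)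
    (hlen : ∀ x : W, cs.length x = (Pos ∩ (ρ x) ⁻¹' (-Pos)).ncard) :
    (∀ x y : W,
      (symmDiff (Pos ∩ (ρ x) ⁻¹' (-Pos)) (Pos ∩ (ρ y) ⁻¹' (-Pos))).ncard =
        cs.length (y * x⁻¹)) ∧
    ∀ q ∈ Set.Icc (-1 : ℝ) 1, ∀ f : W →₀ ℂ,
      0 ≤ ∑ x ∈ f.support, ∑ y ∈ f.support,
        (starRingEnd ℂ) (f x) * f y * (q : ℂ) ^ cs.length (y * x⁻¹) := by
  classical
  have hroots : ∀ w, Set.MapsTo (ρ w) (Pos ∪ -Pos) (Pos ∪ -Pos) := fun w =>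
    Set.mapsTo_iff_image_subset.2 (hinv w).subset
  have hdist : ∀ x y : W,
      (symmDiff (Pos ∩ (ρ x) ⁻¹' (-Pos)) (Pos ∩ (ρ y) ⁻¹' (-Pos))).ncard =
        cs.length (y * x⁻¹) := fun x y => by
    rw [hlen]
    exact ncard_symmDiff_inversionSet hdisj hroots hfin x y
  refine ⟨hdist, fun q hq f => ?_⟩
  have hcard : ∀ x y : W,
      #(symmDiff (hfin x).toFinset (hfin y).toFinset) = cs.length (y * x⁻¹) := fun x y => by
    rw [← hdist, ← Set.ncard_coe_finset, coe_symmDiff, Set.Finite.coe_toFinset,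
      Set.Finite.coe_toFinset]
  simpa only [hcard] using
    quadForm_pow_card_symmDiff_nonneg (fun x => (hfin x).toFinset) hq f.support f
end
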